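/- arXiv:2402.04295 — 3 statements merged into one kernel-verified Lean document; each statement's English description precedes it below -/
import Mathlib

section
/- Let v = (a_0, …, a_{r−1}) ∈ 𝕃^r be the vector of values (f(α^0), …, f(α^{r−1})) of a nonzero polynomial f ∈ 𝕃[Y]/⟨Y^r−1⟩ at the powers of a primitive r-th root of unity α, where 𝕃 is a field of characteristic coprime to r. If v has a cyclic run of δ − 1 consecutive zeros (i.e., there exists b with a_{b} = a_{b+1} = ⋯ = a_{b+δ−2} = 0, indices mod r), then f has Hamming weight at least δ (the BCH bound). -/
/-!
If `f` has `w` nonzero coefficients `c_n` (`n ∈ supp f`), then `f(α^(b+t)) = ∑ c_n (α^n)^b (α^n)^t`.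
The nodes `α^n` are distinct and nonzero since `n < r`, so the `w` equations for `t < w` form an
invertible (transposed) Vandermonde system in the unknowns `c_n (α^n)^b`; hence a run of `w`
consecutive zeros would force `f = 0`.
-/

open Polynomial

theorem Finset.eq_zero_of_forall_sum_mul_pow_add_eq_zero {R ι : Type*} [CommRing R] [IsDomain R]
    {s : Finset ι} {c x : ι → R} (hx : Set.InjOn x s) (hx0 : ∀ i ∈ s, x i ≠ 0) (b : ℕ)
    (h : ∀ t < s.card, ∑ i ∈ s, c i * x i ^ (b + t) = 0) : ∀ i ∈ s, c i = 0 := by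
  let e := s.equivFin
  have hinj : Function.Injective fun j => x (e.symm j) := fun j k hjk =>
    e.symm.injective (Subtype.ext (hx (e.symm j).2 (e.symm k).2 hjk))
  have hv := Matrix.eq_zero_of_forall_pow_sum_mul_pow_eq_zero
    (v := fun j => c (e.symm j) * x (e.symm j) ^ b) hinj fun t => by
      rw [← h t t.2, ← s.sum_coe_sort, ← e.symm.sum_comp]
      simp only [pow_add, mul_assoc]
  intro i hi
  have := congrFun hv (e ⟨i, hi⟩)
  simp only [Equiv.symm_apply_apply, Pi.zero_apply, mul_eq_zero] at this
  exact this.resolve_right (pow_ne_zero _ (hx0 i hi))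

theorem Polynomial.lt_card_support_of_eval_pow_eq_zero {R : Type*} [CommRing R] [IsDomain R]
    {f : R[X]} (hf : f ≠ 0) {β : R} (hβ : Set.InjOn (β ^ ·) f.support) (hβ0 : β ≠ 0) (b k : ℕ)
    (h : ∀ t < k, f.eval (β ^ (b + t)) = 0) : k < f.support.card := by
  by_contra! hk
  have hcoeff := Finset.eq_zero_of_forall_sum_mul_pow_add_eq_zero (c := f.coeff) hβ
    (fun _ _ => pow_ne_zero _ hβ0) b fun t ht => by
      rw [← h t (ht.trans_le hk), eval_eq_sum, sum_def]
      simp only [← pow_mul, mul_comm]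
  obtain ⟨n, hn⟩ := support_nonempty.mpr hf
  exact mem_support_iff.mp hn (hcoeff n hn)

theorem stmt14 (r : ℕ) {L : Type*} [Field L] (α : L) (hα : IsPrimitiveRoot α r)
    (f : Polynomial L) (hf : f ≠ 0) (hdeg : f.natDegree < r)
    (b δ : ℕ) (hrun : ∀ t : ℕ, t < δ - 1 → Polynomial.eval (α ^ (b + t)) f = 0) :
    δ ≤ f.support.card := by
  have hlt : ∀ n ∈ f.support, n < r := fun n hn => (le_natDegree_of_mem_supp n hn).trans_lt hdeg
  have hinj : Set.InjOn (α ^ ·) f.support := fun m hm n hn => hα.pow_inj (hlt m hm) (hlt n hn)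
  obtain ⟨n, hn⟩ := support_nonempty.mpr hf
  have hα0 : α ≠ 0 := hα.ne_zero (by have := hlt n hn; omega)
  have := lt_card_support_of_eval_pow_eq_zero hf hinj hα0 b (δ - 1) hrun
  omega
end

section
/- Let q be a prime power, n and r positive integers coprime to q, α₂ a primitive r-th root of unity, and C the cyclic code of length r over 𝔽_q with defining set D ⊆ ℤ/r. Suppose D contains δ − 1 consecutive residues b, b+1, …, b+δ−2 (mod r). Then the abelian code C_n in 𝔽_q[X,Y]/⟨X^n−1, Y^r−1⟩ with defining set ℤ/n × D has minimum distance at least δ: every nonzero g ∈ C_n has Hamming weight ≥ δ. -/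
/-!
Over `L`, write `g = ∑ⱼ hⱼ(X) Yʲ`. Some `hⱼ` is nonzero of degree `< n`, so it cannot vanish at
all `n` distinct points `α₁ᵃ`; for such an `a` the slice `g(α₁ᵃ, Y)` is a nonzero polynomial
of degree `< r` vanishing at `α₂ᵇ, …, α₂ᵇ⁺ᵟ⁻²`. By the BCH bound it has at least `δ` nonzero
coefficients, and each of them comes from a different monomial of `g`.

The BCH bound itself: if `f` had support `S` with `|S| < δ`, pick `e₀ ∈ S` and let
`Q = ∏_{e ∈ S, e ≠ e₀} (X - αᵉ)`. Pairing the coefficients of `Q` with the zeros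
`f(αᵇ⁺ᵗ) = 0`, `t ≤ deg Q < δ - 1`, gives `0 = ∑_{e ∈ S} fₑ αᵉᵇ Q(αᵉ) = f_{e₀} α^{e₀ b} Q(α^{e₀}) ≠ 0`.
-/

/-- The cyclic code of length `r` over `F` with defining set `D` (codewords are
polynomial representatives of degree `< r`). -/
def cycCode (F : Type*) {L : Type*} [Field F] [Field L] [Algebra F L]
    (r : ℕ) (α₂ : L) (D : Set (ZMod r)) : Set (Polynomial F) :=
  {f | f.natDegree < r ∧ ∀ b ∈ D, Polynomial.aeval (α₂ ^ b.val) f = 0}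

/-- The abelian code in `F[X,Y]/⟨X^n-1, Y^r-1⟩` with defining set `ℤ/n × D`
(codewords are representatives with exponents `< n` and `< r`). -/
def abCode (F : Type*) {L : Type*} [Field F] [Field L] [Algebra F L]
    (n r : ℕ) (α₁ α₂ : L) (D : Set (ZMod r)) : Set (MvPolynomial (Fin 2) F) :=
  {g | (∀ m ∈ g.support, m 0 < n ∧ m 1 < r) ∧
    ∀ a : ZMod n, ∀ b ∈ D, MvPolynomial.aeval ![α₁ ^ a.val, α₂ ^ b.val] g = 0}

open Polynomial

section BCH

variable {K : Type*} [Field K]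

theorem Polynomial.sum_coeff_mul_pow_mul_eval_pow (f Q : K[X]) (α : K) (b : ℕ) :
    ∑ e ∈ f.support, f.coeff e * α ^ (e * b) * Q.eval (α ^ e) =
      ∑ t ∈ Q.support, Q.coeff t * f.eval (α ^ (b + t)) := by
  simp only [eval_eq_sum, Polynomial.sum, Finset.mul_sum]
  rw [Finset.sum_comm]
  refine Finset.sum_congr rfl fun t _ => Finset.sum_congr rfl fun e _ => ?_
  ring

/-- The BCH bound. -/
theorem IsPrimitiveRoot.le_card_support_of_eval_pow_eq_zero {r : ℕ} {α : K}
    (hα : IsPrimitiveRoot α r) {f : K[X]} (hf : f ≠ 0) (hdeg : f.natDegree < r) (b δ : ℕ)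
    (hz : ∀ t < δ - 1, f.eval (α ^ (b + t)) = 0) : δ ≤ f.support.card := by
  classical
  by_contra! hlt
  obtain ⟨e₀, he₀⟩ := nonempty_support_iff.2 hf
  have hlt_r : ∀ e ∈ f.support, e < r := fun e he => (le_natDegree_of_mem_supp e he).trans_lt hdeg
  set Q : K[X] := ∏ e ∈ f.support.erase e₀, (X - C (α ^ e))
  have hQdeg : Q.natDegree < δ - 1 := by
    rw [natDegree_prod _ _ fun e _ => X_sub_C_ne_zero (α ^ e)]
    simp only [natDegree_X_sub_C, Finset.sum_const, smul_eq_mul, mul_one]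
    rw [Finset.card_erase_of_mem he₀]
    have := Finset.card_pos.2 ⟨e₀, he₀⟩
    omega
  have hQ_eq_zero : ∀ e ∈ f.support, e ≠ e₀ → Q.eval (α ^ e) = 0 := fun e he hne => by
    rw [eval_prod]
    exact Finset.prod_eq_zero (Finset.mem_erase.2 ⟨hne, he⟩) (by simp)
  have hQ_ne_zero : Q.eval (α ^ e₀) ≠ 0 := by
    rw [eval_prod, Finset.prod_ne_zero_iff]
    intro e he
    rw [eval_sub, eval_X, eval_C, sub_ne_zero]
    exact fun h => (Finset.mem_erase.1 he).1
      (hα.pow_inj (hlt_r e (Finset.mem_of_mem_erase he)) (hlt_r e₀ he₀) h.symm)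
  have key := sum_coeff_mul_pow_mul_eval_pow f Q α b
  rw [Finset.sum_eq_single_of_mem e₀ he₀ fun e he hne => by rw [hQ_eq_zero e he hne, mul_zero],
    Finset.sum_eq_zero fun t ht => by
      rw [hz t ((le_natDegree_of_mem_supp t ht).trans_lt hQdeg), mul_zero]] at key
  have hα0 : α ≠ 0 := hα.ne_zero (hlt_r e₀ he₀).ne_bot
  exact mul_ne_zero (mul_ne_zero (mem_support_iff.1 he₀) (pow_ne_zero _ hα0)) hQ_ne_zero key

theorem IsPrimitiveRoot.exists_eval_pow_ne_zero {n : ℕ} {α : K} (hα : IsPrimitiveRoot α n)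
    {p : K[X]} (hp : p ≠ 0) (hdeg : p.natDegree < n) : ∃ a < n, p.eval (α ^ a) ≠ 0 := by
  classical
  by_contra! h
  refine hp (eq_zero_of_natDegree_lt_card_of_eval_eq_zero' p
    ((Finset.range n).image (α ^ ·)) ?_ ?_)
  · simpa using h
  · rwa [Finset.card_image_of_injOn (fun x hx y hy => hα.pow_inj (Finset.mem_range.1 hx)
      (Finset.mem_range.1 hy)), Finset.card_range]

theorem Polynomial.natDegree_lt_of_support_subset_image {ι : Type*} {p : K[X]} (hp : p ≠ 0)
    {s : Finset ι} {f : ι → ℕ} (hs : p.support ⊆ s.image f) {n : ℕ}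
    (hf : ∀ i ∈ s, f i < n) : p.natDegree < n := by
  obtain ⟨i, hi, hfi⟩ := Finset.mem_image.1 (hs (natDegree_mem_support_of_nonzero hp))
  exact hfi ▸ hf i hi

theorem IsPrimitiveRoot.pow_val_natCast {n : ℕ} {α : K} (hα : IsPrimitiveRoot α n) (k : ℕ) :
    α ^ (k : ZMod n).val = α ^ k := by
  rw [ZMod.val_natCast, ← pow_eq_pow_mod k hα.pow_eq_one]

end BCH

namespace MvPolynomial

variable {K : Type*} [Field K]

/-- The univariate polynomial `g(x, Y)`. -/
noncomputable def ySlice (g : MvPolynomial (Fin 2) K) (x : K) : K[X] :=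
  aeval ![Polynomial.C x, Polynomial.X] g

/-- The coefficient of `Y ^ j` in `g`, as a polynomial in `X`. -/
noncomputable def yCoeff (g : MvPolynomial (Fin 2) K) (j : ℕ) : K[X] :=
  ∑ m ∈ g.support with m 1 = j, Polynomial.C (g.coeff m) * Polynomial.X ^ m 0

variable (g : MvPolynomial (Fin 2) K)

theorem eval_ySlice (x y : K) : (g.ySlice x).eval y = eval ![x, y] g := by
  rw [ySlice, ← Polynomial.coe_aeval_eq_eval, ← AlgHom.comp_apply, comp_aeval, aeval_eq_eval]
  congr 2
  ext i
  fin_cases i <;> simp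

theorem coeff_ySlice (x : K) (j : ℕ) : (g.ySlice x).coeff j = (g.yCoeff j).eval x := by
  simp only [ySlice, yCoeff, aeval_def, eval₂_eq', Fin.prod_univ_two, finsetSum_coeff,
    eval_finsetSum, Finset.sum_filter]
  refine Finset.sum_congr rfl fun m _ => ?_
  simp only [Matrix.cons_val_zero, Matrix.cons_val_one, Polynomial.algebraMap_eq, ← mul_assoc,
    ← Polynomial.C_pow, ← Polynomial.C_mul, Polynomial.coeff_C_mul_X_pow]
  split_ifs <;> simp_all [eq_comm]

theorem coeff_yCoeff (m : Fin 2 →₀ ℕ) : (g.yCoeff (m 1)).coeff (m 0) = g.coeff m := by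
  have hm_eq : ∀ m' : Fin 2 →₀ ℕ, m' 1 = m 1 → m' 0 = m 0 → m' = m := fun m' h₁ h₀ => by
    ext i
    fin_cases i
    exacts [h₀, h₁]
  rw [yCoeff, finsetSum_coeff, Finset.sum_eq_single m]
  · simp
  · intro m' hm' hne
    rw [Polynomial.coeff_C_mul_X_pow,
      if_neg fun h => hne (hm_eq m' (Finset.mem_filter.1 hm').2 h.symm)]
  · intro hm
    simpa using fun h => hm (Finset.mem_filter.2 ⟨h, rfl⟩)

theorem support_ySlice_subset (x : K) : (g.ySlice x).support ⊆ g.support.image (· 1) := by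
  intro j hj
  rw [Polynomial.mem_support_iff, coeff_ySlice, yCoeff, Polynomial.eval_finsetSum] at hj
  obtain ⟨m, hm, -⟩ := Finset.exists_ne_zero_of_sum_ne_zero hj
  exact Finset.mem_image.2 ⟨m, (Finset.mem_filter.1 hm).1, (Finset.mem_filter.1 hm).2⟩

theorem support_yCoeff_subset (j : ℕ) : (g.yCoeff j).support ⊆ g.support.image (· 0) := by
  intro i hi
  rw [Polynomial.mem_support_iff, yCoeff, finsetSum_coeff] at hi
  obtain ⟨m, hm, hne⟩ := Finset.exists_ne_zero_of_sum_ne_zero hi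
  rw [Polynomial.coeff_C_mul_X_pow] at hne
  exact Finset.mem_image.2 ⟨m, (Finset.mem_filter.1 hm).1, (ite_ne_right_iff.1 hne).1.symm⟩

theorem le_card_support_of_eval_eq_zero {n r : ℕ} {α₁ α₂ : K} (hα₁ : IsPrimitiveRoot α₁ n)
    (hα₂ : IsPrimitiveRoot α₂ r) (hg : g ≠ 0) (hdeg : ∀ m ∈ g.support, m 0 < n ∧ m 1 < r)
    (b δ : ℕ) (hz : ∀ a < n, ∀ t < δ - 1, eval ![α₁ ^ a, α₂ ^ (b + t)] g = 0) :
    δ ≤ g.support.card := by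
  obtain ⟨m₀, hm₀⟩ := support_nonempty.2 hg
  have hrow : g.yCoeff (m₀ 1) ≠ 0 := fun h =>
    mem_support_iff.1 hm₀ (by rw [← coeff_yCoeff, h, Polynomial.coeff_zero])
  obtain ⟨a, ha, hrow_eval⟩ := hα₁.exists_eval_pow_ne_zero hrow
    (natDegree_lt_of_support_subset_image hrow (support_yCoeff_subset g _)
      fun m hm => (hdeg m hm).1)
  have hslice : g.ySlice (α₁ ^ a) ≠ 0 := fun h =>
    hrow_eval (by rw [← coeff_ySlice, h, Polynomial.coeff_zero])
  calc δ ≤ (g.ySlice (α₁ ^ a)).support.card :=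
        hα₂.le_card_support_of_eval_pow_eq_zero hslice
          (natDegree_lt_of_support_subset_image hslice (support_ySlice_subset g _)
            fun m hm => (hdeg m hm).2) b δ
          fun t ht => by rw [eval_ySlice]; exact hz a ha t ht
    _ ≤ (g.support.image (· 1)).card := Finset.card_le_card (support_ySlice_subset g _)
    _ ≤ g.support.card := Finset.card_image_le

end MvPolynomial

theorem stmt17_general (n r : ℕ) {F L : Type*} [Field F] [Field L] [Algebra F L]
    (α₁ α₂ : L) (hα₁ : IsPrimitiveRoot α₁ n) (hα₂ : IsPrimitiveRoot α₂ r)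
    (D : Set (ZMod r)) (b δ : ℕ)
    (hD : ∀ t : ℕ, t < δ - 1 → (((b + t : ℕ) : ZMod r)) ∈ D) :
    ∀ g ∈ abCode F n r α₁ α₂ D, g ≠ 0 → δ ≤ g.support.card := by
  rintro g ⟨hdeg, hzero⟩ hg
  have hinj := (algebraMap F L).injective
  rw [← MvPolynomial.support_map_of_injective g hinj] at hdeg ⊢
  refine MvPolynomial.le_card_support_of_eval_eq_zero _ hα₁ hα₂ ?_ hdeg b δ fun a _ t ht => ?_
  · exact fun h => hg (MvPolynomial.map_injective _ hinj (by rw [h, map_zero]))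
  · rw [MvPolynomial.eval_map, ← MvPolynomial.aeval_def, ← hα₁.pow_val_natCast a,
      ← hα₂.pow_val_natCast]
    exact hzero _ _ (hD t ht)

theorem stmt17 (q n r : ℕ) {F L : Type*} [Field F] [Fintype F] [Field L] [Algebra F L]
    (hq : Fintype.card F = q) (hn : 0 < n) (hr : 0 < r) (hgcd : Nat.Coprime q (n * r))
    (α₁ α₂ : L) (hα₁ : IsPrimitiveRoot α₁ n) (hα₂ : IsPrimitiveRoot α₂ r)
    (D : Set (ZMod r)) (b δ : ℕ)
    (hD : ∀ t : ℕ, t < δ - 1 → (((b + t : ℕ) : ZMod r)) ∈ D) :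
    ∀ g ∈ abCode F n r α₁ α₂ D, g ≠ 0 → δ ≤ g.support.card :=
  stmt17_general n r α₁ α₂ hα₁ hα₂ D b δ hD
end

section
/- Let q be a prime power and r, n positive integers with gcd(q, nr) = 1, and suppose C is a cyclic code of length r over 𝔽_q whose defining set D contains exactly the consecutive residues b, …, b+δ−2 (mod r) with d(C) = δ (e.g., a Reed–Solomon code with r = q−1). Then the abelian code C_n with defining set ℤ/n × D satisfies d(C_n) = δ and dim C_n = n(r − δ + 1). In particular, if n ≥ 2 and δ ≥ 2, C_n is not MDS: d(C_n) < nr − dim C_n + 1. -/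
/-!
Write a codeword `g` of `C_n` as `∑ᵢ Xⁱ fᵢ(Y)` with rows `fᵢ` of degree `< r`. Evaluating at
`(α₁ᵃ, α₂ᵇ)` gives `∑ᵢ (α₁ᵃ)ⁱ fᵢ(α₂ᵇ)`, and as `a` runs over `ℤ/n` this is an invertible
Vandermonde system in the values `fᵢ(α₂ᵇ)`. Hence `g ∈ C_n` iff every row lies in `C`, i.e.
`C_n ≅ Cⁿ`. The weight of `g` is the sum of the weights of its rows, so `d(C_n) = d(C)`, attained
by a codeword of `C` placed in a single row. Since `D` is closed under multiplication by `q`, the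
set `{α₂ᵇ : b ∈ D}` is stable under the Frobenius `x ↦ x^q`, so `∏_{b ∈ D} (X - α₂ᵇ)` has
coefficients in `𝔽_q`; it generates `C`, whence `dim C = r - |D| = r - δ + 1`.
-/

open Polynomial

theorem Polynomial.prod_X_sub_C_dvd_iff {L : Type*} [Field L] (S : Finset L) (p : L[X]) :
    ∏ x ∈ S, (X - C x) ∣ p ↔ ∀ x ∈ S, p.IsRoot x := by
  simp_rw [← dvd_iff_isRoot]
  refine ⟨fun h x hx => (Finset.dvd_prod_of_mem (fun x => X - C x) hx).trans h,
    Finset.prod_dvd_of_coprime ?_⟩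
  exact (pairwise_coprime_X_sub_C Function.injective_id).set_pairwise _

theorem FiniteField.mem_range_algebraMap_of_pow_card_eq {K L : Type*} [Field K] [Fintype K]
    [Field L] [Algebra K L] {x : L} (hx : x ^ Fintype.card K = x) :
    x ∈ Set.range (algebraMap K L) := by
  have hinj := (algebraMap K L).injective
  have hcard : Multiset.card (X ^ Fintype.card K - X : K[X]).roots =
      (X ^ Fintype.card K - X : K[X]).natDegree := by
    rw [roots_X_pow_card_sub_X, X_pow_card_sub_X_natDegree_eq K Fintype.one_lt_card]
    simp
  have hroots : ((X ^ Fintype.card K - X : K[X]).map (algebraMap K L)).roots =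
      Finset.univ.val.map (algebraMap K L) := by
    rw [← roots_map_of_injective_of_card_eq_natDegree hinj hcard, roots_X_pow_card_sub_X]
  have hx' : x ∈ ((X ^ Fintype.card K - X : K[X]).map (algebraMap K L)).roots := by
    rw [mem_roots ((Polynomial.map_ne_zero_iff hinj).2
      (X_pow_card_sub_X_ne_zero K Fintype.one_lt_card))]
    simp [hx]
  obtain ⟨a, -, rfl⟩ := Multiset.mem_map.1 (hroots ▸ hx')
  exact ⟨a, rfl⟩

theorem FiniteField.prod_X_sub_C_mem_lifts {K L : Type*} [Field K] [Fintype K]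
    [Field L] [Algebra K L] (S : Finset L) (hS : ∀ x ∈ S, x ^ Fintype.card K ∈ S) :
    ∏ x ∈ S, (X - C x) ∈ lifts (algebraMap K L) := by
  classical
  set φ := (frobeniusAlgHom K L : L →+* L)
  have hφ : Function.Injective φ := φ.injective
  have himage : S.image φ = S :=
    Finset.eq_of_subset_of_card_le (Finset.image_subset_iff.2 hS)
      (Finset.card_image_of_injective S hφ).ge
  have hfix : (∏ x ∈ S, (X - C x)).map φ = ∏ x ∈ S, (X - C x) := by
    conv_rhs => rw [← himage, Finset.prod_image hφ.injOn]
    simp [Polynomial.map_prod]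
  rw [lifts_iff_coeff_lifts]
  intro i
  apply mem_range_algebraMap_of_pow_card_eq
  simpa [φ, coeff_map] using congrArg (coeff · i) hfix

theorem FiniteField.exists_monic_dvd_iff_forall_aeval_eq_zero {K L : Type*} [Field K] [Fintype K]
    [Field L] [Algebra K L] (S : Finset L) (hS : ∀ x ∈ S, x ^ Fintype.card K ∈ S) :
    ∃ h : K[X], h.Monic ∧ h.natDegree = S.card ∧
      ∀ f : K[X], (∀ x ∈ S, aeval x f = 0) ↔ h ∣ f := by
  obtain ⟨h, hmap, hdeg, hmonic⟩ := lifts_and_natDegree_eq_and_monic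
    (prod_X_sub_C_mem_lifts S hS) (monic_prod_of_monic _ _ fun x _ => monic_X_sub_C x)
  refine ⟨h, hmonic, ?_, fun f => ?_⟩
  · rw [hdeg, natDegree_prod_of_monic _ _ fun x _ => monic_X_sub_C x]
    simp
  · rw [← map_dvd_map' (algebraMap K L), hmap, prod_X_sub_C_dvd_iff]
    simp [aeval_def, eval_map]

theorem Polynomial.mem_degreeLT_iff_natDegree_lt {R : Type*} [Semiring R] {r : ℕ} (hr : 0 < r)
    {p : R[X]} : p ∈ degreeLT R r ↔ p.natDegree < r := by
  rcases eq_or_ne p 0 with rfl | hp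
  · simp [hr]
  · rw [mem_degreeLT, natDegree_lt_iff_degree_lt hp]

theorem Polynomial.mul_mem_degreeLT_iff {R : Type*} [Semiring R] [NoZeroDivisors R]
    {h s : R[X]} (hh : h ≠ 0) (r : ℕ) :
    h * s ∈ degreeLT R r ↔ s ∈ degreeLT R (r - h.natDegree) := by
  rcases eq_or_ne s 0 with rfl | hs
  · simp only [mul_zero, Submodule.zero_mem]
  rw [mem_degreeLT, mem_degreeLT, degree_eq_natDegree (mul_ne_zero hh hs),
    degree_eq_natDegree hs, natDegree_mul hh hs, Nat.cast_lt, Nat.cast_lt]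
  omega

theorem Polynomial.finrank_degreeLT_inf_range_mulLeft {K : Type*} [Field K] {h : K[X]}
    (hh : h ≠ 0) (r : ℕ) :
    Module.finrank K ↥(degreeLT K r ⊓ LinearMap.range (LinearMap.mulLeft K h)) =
      r - h.natDegree := by
  set μ := LinearMap.mulLeft K h ∘ₗ (degreeLT K (r - h.natDegree)).subtype
  have hμ : Function.Injective μ := fun s t hst =>
    Subtype.val_injective (mul_left_cancel₀ hh hst)
  have hrange : LinearMap.range μ = degreeLT K r ⊓ LinearMap.range (LinearMap.mulLeft K h) := by
    ext f
    constructor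
    · rintro ⟨⟨s, hs⟩, rfl⟩
      exact ⟨(mul_mem_degreeLT_iff hh r).2 hs, s, rfl⟩
    · rintro ⟨hf, s, rfl⟩
      exact ⟨⟨s, (mul_mem_degreeLT_iff hh r).1 hf⟩, rfl⟩
  rw [← hrange, LinearMap.finrank_range_of_inj hμ, (degreeLTEquiv K _).finrank_eq,
    Module.finrank_fin_fun]

theorem IsPrimitiveRoot.eq_zero_of_forall_sum_pow_mul_eq_zero {L : Type*} [CommRing L]
    [IsDomain L] {α : L} {n : ℕ} (hα : IsPrimitiveRoot α n) {c : Fin n → L}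
    (h : ∀ a : Fin n, ∑ i : Fin n, (α ^ (a : ℕ)) ^ (i : ℕ) * c i = 0) : c = 0 :=
  Matrix.eq_zero_of_mulVec_eq_zero
    (Matrix.det_vandermonde_ne_zero_iff.2 fun a b hab => Fin.ext (hα.pow_inj a.2 b.2 hab))
    (funext h)

theorem IsPrimitiveRoot.pow_val_injective {L : Type*} [CommMonoid L] {α : L} {r : ℕ} [NeZero r]
    (hα : IsPrimitiveRoot α r) : Function.Injective fun x : ZMod r => α ^ x.val :=
  fun x y h => ZMod.val_injective r (hα.pow_inj (ZMod.val_lt x) (ZMod.val_lt y) h)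

theorem IsPrimitiveRoot.pow_val_pow {L : Type*} [CommMonoid L] {α : L} {r : ℕ} [NeZero r]
    (hα : IsPrimitiveRoot α r) (x : ZMod r) (m : ℕ) : (α ^ x.val) ^ m = α ^ (x * m).val := by
  rw [← pow_mul]
  refine pow_eq_pow_of_modEq ((ZMod.natCast_eq_natCast_iff _ _ _).1 ?_) hα.pow_eq_one
  simp

theorem ZMod.card_image_range_natCast_add (b : ℕ) {k r : ℕ} (hk : k ≤ r) :
    ((Finset.range k).image fun t => ((b + t : ℕ) : ZMod r)).card = k := by
  rw [Finset.card_image_of_injOn, Finset.card_range]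
  intro t ht t' ht' h
  simp only [Finset.coe_range, Set.mem_Iio, Nat.cast_add] at ht ht' h
  have := congrArg ZMod.val (add_left_cancel h)
  rwa [ZMod.val_cast_of_lt (by omega), ZMod.val_cast_of_lt (by omega)] at this

theorem IsPrimitiveRoot.exists_monic_dvd_iff_forall_aeval_pow_val_eq_zero {F L : Type*} [Field F]
    [Fintype F] [Field L] [Algebra F L] {r : ℕ} [NeZero r] {α : L} (hα : IsPrimitiveRoot α r)
    (D : Finset (ZMod r)) (hD : ∀ x ∈ D, x * (Fintype.card F : ZMod r) ∈ D) :
    ∃ h : F[X], h.Monic ∧ h.natDegree = D.card ∧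
      ∀ f : F[X], (∀ x ∈ D, aeval (α ^ x.val) f = 0) ↔ h ∣ f := by
  classical
  obtain ⟨h, hmonic, hdeg, hh⟩ :=
    FiniteField.exists_monic_dvd_iff_forall_aeval_eq_zero (K := F) (D.image fun x => α ^ x.val)
      (Finset.forall_mem_image.2 fun x hx => by
        rw [hα.pow_val_pow]
        exact Finset.mem_image_of_mem _ (hD x hx))
  refine ⟨h, hmonic, by rw [hdeg, Finset.card_image_of_injective _ hα.pow_val_injective],
    fun f => ?_⟩
  rw [← hh, Finset.forall_mem_image]

theorem Nat.sInf_eq_of_subset_of_forall_exists_le {A B : Set ℕ} (hAB : A ⊆ B)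
    (hBA : ∀ b ∈ B, ∃ a ∈ A, a ≤ b) : sInf A = sInf B := by
  rcases B.eq_empty_or_nonempty with rfl | hB
  · rw [Set.subset_empty_iff.1 hAB]
  obtain ⟨a, ha, hab⟩ := hBA _ (Nat.sInf_mem hB)
  exact le_antisymm ((Nat.sInf_le ha).trans hab) (csInf_le_csInf' ⟨a, ha⟩ hAB)

namespace AbelianCode

section Rows

variable {F : Type*} [CommSemiring F]

noncomputable def biExp (i j : ℕ) : Fin 2 →₀ ℕ := Finsupp.single 0 i + Finsupp.single 1 j

@[simp] theorem biExp_apply_zero (i j : ℕ) : biExp i j 0 = i := by simp [biExp]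

@[simp] theorem biExp_apply_one (i j : ℕ) : biExp i j 1 = j := by simp [biExp]

theorem biExp_eta (m : Fin 2 →₀ ℕ) : biExp (m 0) (m 1) = m :=
  Finsupp.ext (Fin.forall_fin_two.2 ⟨by simp, by simp⟩)

@[simp] theorem biExp_inj {i j i' j' : ℕ} : biExp i j = biExp i' j' ↔ i = i' ∧ j = j' :=
  ⟨fun h => ⟨by simpa using congrArg (· 0) h, by simpa using congrArg (· 1) h⟩,
    fun ⟨hi, hj⟩ => hi ▸ hj ▸ rfl⟩

theorem coeff_X_pow_mul_toMvPolynomial (i : ℕ) (p : F[X]) (k j : ℕ) :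
    MvPolynomial.coeff (biExp k j) (MvPolynomial.X 0 ^ i * p.toMvPolynomial 1) =
      if k = i then p.coeff j else 0 := by
  induction p using Polynomial.induction_on' with
  | add p q hp hq =>
    simp only [map_add, mul_add, MvPolynomial.coeff_add, hp, hq, coeff_add]
    split_ifs <;> simp
  | monomial j' c =>
    rw [← C_mul_X_pow_eq_monomial, map_mul, map_pow, toMvPolynomial_C, toMvPolynomial_X,
      MvPolynomial.X_pow_eq_monomial, MvPolynomial.X_pow_eq_monomial, MvPolynomial.C_mul_monomial,
      MvPolynomial.monomial_mul, one_mul, mul_one, MvPolynomial.coeff_monomial, coeff_C_mul_X_pow]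
    change ite (biExp i j' = biExp k j) _ _ = _
    simp only [biExp_inj]
    grind

noncomputable def ofRows (n : ℕ) : (Fin n → F[X]) →ₗ[F] MvPolynomial (Fin 2) F :=
  ∑ i : Fin n, LinearMap.mulLeft F (MvPolynomial.X 0 ^ (i : ℕ)) ∘ₗ
    (toMvPolynomial 1).toLinearMap ∘ₗ LinearMap.proj i

theorem ofRows_apply {n : ℕ} (f : Fin n → F[X]) :
    ofRows n f = ∑ i : Fin n, MvPolynomial.X 0 ^ (i : ℕ) * (f i).toMvPolynomial 1 := by
  simp [ofRows]

theorem coeff_ofRows {n : ℕ} (f : Fin n → F[X]) (k j : ℕ) :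
    MvPolynomial.coeff (biExp k j) (ofRows n f) =
      if h : k < n then (f ⟨k, h⟩).coeff j else 0 := by
  simp only [ofRows_apply, MvPolynomial.coeff_sum, coeff_X_pow_mul_toMvPolynomial]
  split_ifs with h
  · rw [Finset.sum_eq_single ⟨k, h⟩ (fun i _ hi => if_neg fun hk => hi (Fin.ext hk.symm))
      (fun h' => absurd (Finset.mem_univ _) h'), if_pos rfl]
  · exact Finset.sum_eq_zero fun i _ => if_neg fun (hk : k = i) => h (hk ▸ i.isLt)

theorem ofRows_injective (n : ℕ) : Function.Injective (ofRows (F := F) n) := by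
  intro f f' hff
  funext i
  ext j
  simpa [coeff_ofRows] using congrArg (MvPolynomial.coeff (biExp i j)) hff

theorem card_support_ofRows {n : ℕ} (f : Fin n → F[X]) :
    (ofRows n f).support.card = ∑ i, (f i).support.card := by
  rw [← Finset.card_sigma]
  symm
  refine Finset.card_bij (fun x _ => biExp x.1 x.2) ?_ ?_ ?_
  · rintro ⟨i, j⟩ hij
    rw [Finset.mem_sigma] at hij
    simpa [MvPolynomial.mem_support_iff, coeff_ofRows] using hij.2
  · rintro ⟨i, j⟩ - ⟨i', j'⟩ - h
    obtain ⟨hi, rfl⟩ := biExp_inj.1 h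
    obtain rfl := Fin.ext hi
    rfl
  · intro m hm
    rw [MvPolynomial.mem_support_iff, ← biExp_eta m, coeff_ofRows] at hm
    split_ifs at hm with h
    · exact ⟨⟨⟨m 0, h⟩, m 1⟩, by simpa using hm, biExp_eta m⟩
    · exact absurd rfl hm

theorem card_support_ofRows_single {n : ℕ} (i : Fin n) (p : F[X]) :
    (ofRows n (Pi.single i p)).support.card = p.support.card := by
  rw [card_support_ofRows, Fintype.sum_eq_single i fun j hj => by simp [Pi.single_eq_of_ne hj],
    Pi.single_eq_same]

theorem aeval_ofRows {L : Type*} [CommSemiring L] [Algebra F L] {n : ℕ} (f : Fin n → F[X])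
    (x y : L) :
    MvPolynomial.aeval ![x, y] (ofRows n f) = ∑ i : Fin n, x ^ (i : ℕ) * aeval y (f i) := by
  simp [ofRows_apply, MvPolynomial.aeval_toMvPolynomial]

theorem support_lt_iff_exists_ofRows {n r : ℕ} {g : MvPolynomial (Fin 2) F} :
    (∀ m ∈ g.support, m 0 < n ∧ m 1 < r) ↔
      ∃ f : Fin n → F[X], (∀ i, f i ∈ degreeLT F r) ∧ ofRows n f = g := by
  constructor
  · intro hg
    refine ⟨fun i => ∑ j ∈ Finset.range r, monomial j (MvPolynomial.coeff (biExp i j) g),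
      fun i => ?_, ?_⟩
    · exact Submodule.sum_mem _ fun j hj => mem_degreeLT.2
        ((degree_monomial_le _ _).trans_lt (by exact_mod_cast Finset.mem_range.1 hj))
    · ext m
      by_cases hm : m ∈ g.support
      · obtain ⟨h0, h1⟩ := hg m hm
        rw [← biExp_eta m, coeff_ofRows, dif_pos h0]
        simp [coeff_monomial, h1]
      · rw [MvPolynomial.notMem_support_iff.1 hm, ← biExp_eta m, coeff_ofRows]
        split_ifs
        · simp [coeff_monomial, biExp_eta, MvPolynomial.notMem_support_iff.1 hm]
        · rfl
  · rintro ⟨f, hf, rfl⟩ m hm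
    rw [MvPolynomial.mem_support_iff, ← biExp_eta m, coeff_ofRows] at hm
    split_ifs at hm with h
    · refine ⟨h, ?_⟩
      by_contra h'
      exact hm (coeff_eq_zero_of_degree_lt
        ((mem_degreeLT.1 (hf _)).trans_le (by exact_mod_cast not_lt.1 h')))
    · exact absurd rfl hm

theorem sInf_card_support_image_ofRows {n : ℕ} (hn : 0 < n) {C : Set F[X]} (hC : 0 ∈ C) :
    sInf {w | ∃ g ∈ ofRows n '' {f | ∀ i, f i ∈ C}, g ≠ 0 ∧ w = g.support.card} =
      sInf {w | ∃ f ∈ C, f ≠ 0 ∧ w = f.support.card} := by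
  symm
  apply Nat.sInf_eq_of_subset_of_forall_exists_le
  · rintro _ ⟨p, hp, hp0, rfl⟩
    refine ⟨ofRows n (Pi.single ⟨0, hn⟩ p), ⟨_, fun i => ?_, rfl⟩, ?_,
      (card_support_ofRows_single _ _).symm⟩
    · rcases eq_or_ne i ⟨0, hn⟩ with rfl | hi
      · simpa using hp
      · simpa [Pi.single_eq_of_ne hi] using hC
    · rw [Ne, ← map_zero (ofRows n), (ofRows_injective n).eq_iff]
      exact fun h => hp0 (by simpa using congrFun h ⟨0, hn⟩)
  · rintro _ ⟨_, ⟨f, hf, rfl⟩, hg0, rfl⟩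
    obtain ⟨i, hi⟩ : ∃ i, f i ≠ 0 := by
      by_contra! h
      exact hg0 (by rw [show f = 0 from funext h, map_zero])
    refine ⟨_, ⟨f i, hf i, hi, rfl⟩, ?_⟩
    rw [card_support_ofRows]
    exact Finset.single_le_sum (f := fun i => (f i).support.card) (fun _ _ => Nat.zero_le _)
      (Finset.mem_univ i)

end Rows

section Codes

variable {F L : Type*} [Field F] [Field L] [Algebra F L]

theorem finrank_eq_mul_of_coe_eq_image_ofRows {n : ℕ} (P : Submodule F F[X]) [Module.Finite F P]
    {Cn : Submodule F (MvPolynomial (Fin 2) F)}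
    (hCn : (Cn : Set (MvPolynomial (Fin 2) F)) = ofRows n '' {f | ∀ i, f i ∈ P}) :
    Module.finrank F Cn = n * Module.finrank F P := by
  set Φ := ofRows n ∘ₗ LinearMap.piMap fun _ : Fin n => P.subtype
  have hΦ : Function.Injective Φ := (ofRows_injective n).comp fun f g h =>
    funext fun i => Subtype.val_injective (congrFun h i)
  have hrange : LinearMap.range Φ = Cn := by
    apply SetLike.coe_injective
    rw [hCn, LinearMap.coe_range]
    ext g
    constructor
    · rintro ⟨f, rfl⟩
      exact ⟨_, fun i => (f i).2, rfl⟩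
    · rintro ⟨f, hf, rfl⟩
      exact ⟨fun i => ⟨f i, hf i⟩, rfl⟩
  rw [← hrange, LinearMap.finrank_range_of_inj hΦ, Module.finrank_pi_fintype]
  simp

theorem abCode_eq_image_ofRows {n r : ℕ} {α₁ α₂ : L} (hα₁ : IsPrimitiveRoot α₁ n) (hr : 0 < r)
    (D : Set (ZMod r)) :
    abCode F n r α₁ α₂ D = ofRows n '' {f | ∀ i, f i ∈ cycCode F r α₂ D} := by
  ext g
  constructor
  · rintro ⟨hbox, hzero⟩
    obtain ⟨f, hf, rfl⟩ := support_lt_iff_exists_ofRows.1 hbox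
    refine ⟨f, fun i => ⟨(mem_degreeLT_iff_natDegree_lt hr).1 (hf i), fun b hb => ?_⟩, rfl⟩
    have hrows := hα₁.eq_zero_of_forall_sum_pow_mul_eq_zero
      (c := fun i => aeval (α₂ ^ b.val) (f i)) fun a => by
        simpa [aeval_ofRows, ZMod.val_cast_of_lt a.2] using hzero ((a : ℕ) : ZMod n) b hb
    exact congrFun hrows i
  · rintro ⟨f, hf, rfl⟩
    refine ⟨support_lt_iff_exists_ofRows.2
      ⟨f, fun i => (mem_degreeLT_iff_natDegree_lt hr).2 (hf i).1, rfl⟩, fun a b hb => ?_⟩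
    simp [aeval_ofRows, (hf _).2 b hb]

theorem cycCode_eq_degreeLT_inf_range_mulLeft {r : ℕ} (hr : 0 < r) {α₂ : L}
    {D : Set (ZMod r)} {h : F[X]} (hh : ∀ f : F[X], (∀ b ∈ D, aeval (α₂ ^ b.val) f = 0) ↔ h ∣ f) :
    cycCode F r α₂ D = ↑(degreeLT F r ⊓ LinearMap.range (LinearMap.mulLeft F h)) := by
  ext f
  change (f.natDegree < r ∧ _) ↔ f ∈ degreeLT F r ∧ f ∈ LinearMap.range _
  rw [mem_degreeLT_iff_natDegree_lt hr, hh, LinearMap.mem_range]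
  simp only [LinearMap.mulLeft_apply, dvd_def, eq_comm]

end Codes

end AbelianCode

open AbelianCode in
theorem stmt18_general (q n r δ : ℕ) {F L : Type*} [Field F] [Fintype F] [Field L] [Algebra F L]
    (hq : Fintype.card F = q) (hn : 2 ≤ n) (hδ : 2 ≤ δ) (hδr : δ ≤ r)
    (α₁ α₂ : L) (hα₁ : IsPrimitiveRoot α₁ n) (hα₂ : IsPrimitiveRoot α₂ r)
    (b : ℕ) (D : Set (ZMod r))
    (hD : D = {x : ZMod r | ∃ t : ℕ, t < δ - 1 ∧ x = ((b + t : ℕ) : ZMod r)})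
    (hDq : ∀ x ∈ D, x * (q : ZMod r) ∈ D)
    (hdC : sInf {w : ℕ | ∃ f ∈ cycCode F r α₂ D, f ≠ 0 ∧ w = f.support.card} = δ)
    (Cn : Submodule F (MvPolynomial (Fin 2) F))
    (hCn : (Cn : Set (MvPolynomial (Fin 2) F)) = abCode F n r α₁ α₂ D) :
    sInf {w : ℕ | ∃ g ∈ abCode F n r α₁ α₂ D, g ≠ 0 ∧ w = g.support.card} = δ ∧
    Module.finrank F Cn = n * (r - δ + 1) ∧
    δ < n * r - Module.finrank F Cn + 1 := by
  have hr : 0 < r := by omega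
  have : NeZero r := ⟨hr.ne'⟩
  set Dfin := (Finset.range (δ - 1)).image fun t => ((b + t : ℕ) : ZMod r)
  have hDfin : D = Dfin := by
    rw [hD]
    ext x
    simp [Dfin, eq_comm]
  subst hDfin
  obtain ⟨h, hmonic, hdeg, hh⟩ :=
    hα₂.exists_monic_dvd_iff_forall_aeval_pow_val_eq_zero (F := F) Dfin (by simpa [hq] using hDq)
  have hcyc := cycCode_eq_degreeLT_inf_range_mulLeft hr hh
  have hab := abCode_eq_image_ofRows (F := F) (α₂ := α₂) hα₁ hr Dfin
  have hdimC := finrank_degreeLT_inf_range_mulLeft hmonic.ne_zero r (K := F)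
  rw [hdeg, ZMod.card_image_range_natCast_add b (by omega : δ - 1 ≤ r)] at hdimC
  have := Module.finite_of_finrank_pos (hdimC ▸ (by omega : 0 < r - (δ - 1)))
  have hrank : Module.finrank F Cn = n * (r - δ + 1) := by
    rw [finrank_eq_mul_of_coe_eq_image_ofRows _ (hCn.trans (hcyc ▸ hab)), hdimC]
    congr 1
    omega
  refine ⟨?_, hrank, ?_⟩
  · rw [hab, sInf_card_support_image_ofRows (by omega) (hcyc ▸ zero_mem _), hdC]
  · have hsplit : n * r = n * (r - δ + 1) + n * (δ - 1) := by
      rw [← mul_add]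
      congr 1
      omega
    have : 2 * (δ - 1) ≤ n * (δ - 1) := Nat.mul_le_mul_right _ hn
    omega

theorem stmt18 (q n r δ : ℕ) {F L : Type*} [Field F] [Fintype F] [Field L] [Algebra F L]
    (hq : Fintype.card F = q) (hn : 2 ≤ n) (hr : 0 < r) (hδ : 2 ≤ δ) (hδr : δ ≤ r)
    (hgcd : Nat.Coprime q (n * r))
    (α₁ α₂ : L) (hα₁ : IsPrimitiveRoot α₁ n) (hα₂ : IsPrimitiveRoot α₂ r)
    (b : ℕ) (D : Set (ZMod r))
    (hD : D = {x : ZMod r | ∃ t : ℕ, t < δ - 1 ∧ x = ((b + t : ℕ) : ZMod r)})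
    (hDq : ∀ x ∈ D, x * (q : ZMod r) ∈ D)
    (hdC : sInf {w : ℕ | ∃ f ∈ cycCode F r α₂ D, f ≠ 0 ∧ w = f.support.card} = δ)
    (Cn : Submodule F (MvPolynomial (Fin 2) F))
    (hCn : (Cn : Set (MvPolynomial (Fin 2) F)) = abCode F n r α₁ α₂ D) :
    sInf {w : ℕ | ∃ g ∈ abCode F n r α₁ α₂ D, g ≠ 0 ∧ w = g.support.card} = δ ∧
    Module.finrank F Cn = n * (r - δ + 1) ∧
    δ < n * r - Module.finrank F Cn + 1 :=
  stmt18_general q n r δ hq hn hδ hδr α₁ α₂ hα₁ hα₂ b D hD hDq hdC Cn hCn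
end
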